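/- The number of affine permutations in S̃_n avoiding the pattern 312 equals binomial(2n-1, n). -/

import Mathlib

/-!
An affine permutation `ω` is determined by its affine Lehmer code `c i = #{j > i | ω j < ω i}`,
and the codes that occur are exactly the `n`-periodic sequences of naturals with a zero: composing
`ω` with the affine simple reflection at a descent lowers the number of inversions per period by
one, so injectivity and surjectivity both follow by induction on the sum of the code over a
period. The permutation `ω` avoids `312` iff `c i ≤ c (i + 1) + 1` for all `i`, because a `312`
pattern can be moved until its `3` and `1` are adjacent. Through their increments
`c (i + 1) - c i + 1` over one period such codes correspond to the weak compositions of `n` into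
`n` parts, of which there are `C(2n - 1, n)`.
-/

open Function Finset

section Periodic

variable {α M : Type*} {n : ℕ}

theorem Int.eq_of_zmod_cast_eq {i j : ℤ} (h : (i : ZMod n) = j) (h₁ : i - j < n)
    (h₂ : j - i < n) : i = j := by
  have := Int.eq_zero_of_abs_lt_dvd ((ZMod.intCast_eq_intCast_iff_dvd_sub i j n).1 h)
    (abs_lt.2 ⟨by omega, h₂⟩)
  omega

theorem ZMod.add_one_ne_self (hn : 1 < n) (x : ZMod n) : x + 1 ≠ x := by
  have : Fact (1 < n) := ⟨hn⟩
  simp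

theorem Function.Periodic.eq_of_intCast_eq {f : ℤ → α} (hf : Periodic f n) {i j : ℤ}
    (h : (i : ZMod n) = j) : f i = f j := by
  obtain ⟨t, ht⟩ := (ZMod.intCast_eq_intCast_iff_dvd_sub i j n).1 h
  have := (hf.int_mul t) i
  rw [Int.cast_id] at this
  rw [show j = i + t * n by linarith, this]

theorem Function.Periodic.forall_of_forall_lt {f : ℤ → α} (hf : Periodic f n) (hn : 0 < n)
    {p : α → Prop} (h : ∀ k : ℕ, k < n → p (f k)) (i : ℤ) : p (f i) := by
  obtain ⟨y, ⟨hy0, hyn⟩, hy⟩ := hf.exists_mem_Ico₀ (by exact_mod_cast hn) i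
  rw [hy, ← Int.toNat_of_nonneg hy0]
  exact h _ (by omega)

theorem Function.Periodic.finite_range {f : ℤ → α} (hf : Periodic f n) (hn : 0 < n) :
    (Set.range f).Finite := by
  rw [← hf.image_Ioc (by exact_mod_cast hn) 0]
  exact (Set.finite_Ioc _ _).image f

theorem Function.Periodic.sum_Ico_add_eq [AddCommMonoid M] {f : ℤ → M} (hf : Periodic f n)
    (a b : ℤ) : ∑ i ∈ Ico a (a + n), f i = ∑ i ∈ Ico b (b + n), f i := by
  rcases Nat.eq_zero_or_pos n with rfl | hn
  · simp
  have step : ∀ a : ℤ, ∑ i ∈ Ico (a + 1) (a + 1 + n), f i = ∑ i ∈ Ico a (a + n), f i := by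
    intro a
    rw [show a + 1 + n = a + n + 1 by ring,
      ← insert_Ico_right_eq_Ico_add_one (show a + 1 ≤ a + n by omega), sum_insert (by simp),
      ← insert_Ico_add_one_left_eq_Ico (show a < a + n by omega), sum_insert (by simp), hf a]
  have h0 : ∀ a : ℤ, ∑ i ∈ Ico a (a + n), f i = ∑ i ∈ Ico (0 : ℤ) (0 + n), f i := by
    intro a
    induction a using Int.induction_on with
    | zero => rfl
    | succ k ih => rw [step, ih]
    | pred k ih => rw [← ih, ← step, sub_add_cancel]
  rw [h0 a, h0 b]

theorem Int.apply_eq_apply_zero {f : ℤ → α} (hf : ∀ i, f (i + 1) = f i) (i : ℤ) : f i = f 0 := by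
  simpa using (show Periodic f 1 from hf).int_mul_eq i

theorem Function.Periodic.eq_zero_of_le_add_one {v : ℤ → ℕ} (hv : Periodic v n) (hn : 0 < n)
    (hmono : ∀ i, v i ≤ v (i + 1)) {z : ℤ} (hz : v z = 0) (i : ℤ) : v i = 0 := by
  have hle : i ≤ z + |i - z| * n := by
    have : |i - z| ≤ |i - z| * n := le_mul_of_one_le_right (abs_nonneg _) (by exact_mod_cast hn)
    linarith [le_abs_self (i - z)]
  have := monotone_int_of_le_succ hmono hle
  have hper := (hv.int_mul |i - z|) z
  rw [Int.cast_id] at hper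
  rw [hper, hz] at this
  omega

end Periodic

theorem Int.exists_le_lt_and_not_add_one {p : ℤ → Prop} {a b : ℤ} (hab : a < b) (ha : p a)
    (hb : ¬ p b) : ∃ k, a ≤ k ∧ k < b ∧ p k ∧ ¬ p (k + 1) := by
  induction b, (show a + 1 ≤ b by omega) using Int.leInduction with
  | base => exact ⟨a, le_rfl, by omega, ha, hb⟩
  | succ b hab' ih =>
    by_cases hpb : p b
    · exact ⟨b, by omega, by omega, hpb, hb⟩
    · obtain ⟨k, h1, h2, h3, h4⟩ := ih (by omega) hpb
      exact ⟨k, h1, by omega, h3, h4⟩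

theorem Int.sum_Icc_one_id (n : ℕ) : ∑ i ∈ Icc (1 : ℤ) n, i = (n + 1).choose 2 := by
  induction n with
  | zero => simp
  | succ m ih =>
    rw [Nat.cast_succ, ← insert_Icc_right_eq_Icc_add_one (by omega), sum_insert (by simp), ih,
      Nat.choose_succ_succ' (m + 1) 1]
    push_cast [Nat.choose_one_right]
    ring

namespace AffinePerm

structure IsAffinePerm (n : ℕ) (ω : ℤ → ℤ) : Prop where
  bijective : Bijective ω
  apply_add : ∀ i, ω (i + n) = ω i + n
  sum_Icc : ∑ i ∈ Icc 1 (n : ℤ), ω i = (n + 1).choose 2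

def Avoids312 (ω : ℤ → ℤ) : Prop :=
  ¬ ∃ i₁ i₂ i₃ : ℤ, i₁ < i₂ ∧ i₂ < i₃ ∧ ω i₂ < ω i₃ ∧ ω i₃ < ω i₁

def inversionsFrom (ω : ℤ → ℤ) (i : ℤ) : Set ℤ := {j | i < j ∧ ω j < ω i}

noncomputable def code (ω : ℤ → ℤ) (i : ℤ) : ℕ := (inversionsFrom ω i).ncard

variable {n : ℕ} {ω : ℤ → ℤ}

theorem periodic_sub_self (hper : ∀ i, ω (i + n) = ω i + n) : Periodic (fun i => ω i - i) n :=
  fun i => by simp only [hper]; ring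

theorem periodic_apply_add_one_sub (hper : ∀ i, ω (i + n) = ω i + n) :
    Periodic (fun i => ω (i + 1) - ω i) n :=
  fun i => by simp only [add_right_comm i (n : ℤ) 1, hper]; ring

theorem sum_Icc_eq_choose_iff (hper : ∀ i, ω (i + n) = ω i + n) (a : ℤ) :
    ∑ i ∈ Icc 1 (n : ℤ), ω i = (n + 1).choose 2 ↔ ∑ i ∈ Ico a (a + n), (ω i - i) = 0 := by
  rw [(periodic_sub_self hper).sum_Ico_add_eq a 1, add_comm (1 : ℤ), Ico_add_one_right_eq_Icc,
    sum_sub_distrib, Int.sum_Icc_one_id, sub_eq_zero]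

theorem exists_add_le_apply (hn : 0 < n) (hper : ∀ i, ω (i + n) = ω i + n) :
    ∃ m, ∀ j, j + m ≤ ω j := by
  obtain ⟨m, hm⟩ := ((periodic_sub_self hper).finite_range hn).bddBelow
  exact ⟨m, fun j => by have := hm ⟨j, rfl⟩; simp only at this; omega⟩

theorem finite_inversionsFrom (hn : 0 < n) (hper : ∀ i, ω (i + n) = ω i + n) (i : ℤ) :
    (inversionsFrom ω i).Finite := by
  obtain ⟨m, hm⟩ := exists_add_le_apply hn hper
  exact (Set.finite_Ioo i (ω i - m)).subset fun j ⟨hij, hj⟩ => ⟨hij, by have := hm j; omega⟩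

theorem code_periodic (hper : ∀ i, ω (i + n) = ω i + n) : Periodic (code ω) n := by
  intro i
  have : inversionsFrom ω (i + n) = (· + (n : ℤ)) '' inversionsFrom ω i := by
    ext j
    refine ⟨fun ⟨h1, h2⟩ => ⟨j - n, ⟨by omega, ?_⟩, by ring⟩, ?_⟩
    · have := hper (j - n)
      rw [sub_add_cancel] at this
      rw [hper] at h2
      omega
    · rintro ⟨j, ⟨h1, h2⟩, rfl⟩
      exact ⟨by simp only; omega, by simp only [hper]; omega⟩
  rw [code, this, Set.ncard_image_of_injective _ (add_left_injective _), code]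

theorem exists_code_eq_zero (hn : 0 < n) (hper : ∀ i, ω (i + n) = ω i + n) :
    ∃ i, code ω i = 0 := by
  obtain ⟨m, hm⟩ := exists_add_le_apply hn hper
  -- the least value of `ω` on `[0, ∞)` has no inversions
  obtain ⟨_, ⟨i, hi, rfl⟩, hleast⟩ := Int.exists_least_of_bdd (P := fun z => ∃ j, 0 ≤ j ∧ ω j = z)
    ⟨m, fun z ⟨j, hj, hjz⟩ => by have := hm j; omega⟩ ⟨ω 0, 0, le_rfl, rfl⟩
  refine ⟨i, ?_⟩
  rw [code, Set.ncard_eq_zero (finite_inversionsFrom hn hper i), Set.eq_empty_iff_forall_notMem]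
  rintro j ⟨hij, hj⟩
  have := hleast _ ⟨j, by omega, rfl⟩
  omega

theorem code_eq_of_apply_add_one_lt (hn : 0 < n) (hper : ∀ i, ω (i + n) = ω i + n)
    (hinj : Injective ω) {i : ℤ} (hd : ω (i + 1) < ω i) :
    code ω i = code ω (i + 1) + 1 + {j | i + 1 < j ∧ ω (i + 1) < ω j ∧ ω j < ω i}.ncard := by
  set B := {j | i + 1 < j ∧ ω (i + 1) < ω j ∧ ω j < ω i}
  have hB : B.Finite := (finite_inversionsFrom hn hper i).subset fun j ⟨h1, _, h3⟩ => ⟨by omega, h3⟩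
  have hsplit : inversionsFrom ω i = insert (i + 1) (inversionsFrom ω (i + 1) ∪ B) := by
    ext j
    simp only [inversionsFrom, B, Set.mem_ofPred_eq, Set.mem_insert_iff, Set.mem_union]
    constructor
    · rintro ⟨h1, h2⟩
      rcases eq_or_ne j (i + 1) with rfl | hj
      · exact Or.inl rfl
      rcases (hinj.ne hj).lt_or_gt with h | h
      · exact Or.inr (Or.inl ⟨by omega, h⟩)
      · exact Or.inr (Or.inr ⟨by omega, h, h2⟩)
    · rintro (rfl | ⟨h1, h2⟩ | ⟨h1, _, h3⟩)
      exacts [⟨by omega, hd⟩, ⟨by omega, by omega⟩, ⟨by omega, h3⟩]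
  have hdisj : Disjoint (inversionsFrom ω (i + 1)) B :=
    Set.disjoint_left.2 fun j ⟨_, h⟩ ⟨_, h', _⟩ => by omega
  rw [code, hsplit, Set.ncard_insert_of_notMem (by rintro (⟨h, _⟩ | ⟨h, _⟩) <;> omega)
    ((finite_inversionsFrom hn hper _).union hB), Set.ncard_union_eq hdisj
    (finite_inversionsFrom hn hper _) hB, code]
  ring

theorem code_add_one_eq_of_apply_lt (hn : 0 < n) (hper : ∀ i, ω (i + n) = ω i + n)
    (hinj : Injective ω) {i : ℤ} (ha : ω i < ω (i + 1)) :
    code ω (i + 1) = code ω i + {j | i + 1 < j ∧ ω i < ω j ∧ ω j < ω (i + 1)}.ncard := by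
  set B := {j | i + 1 < j ∧ ω i < ω j ∧ ω j < ω (i + 1)}
  have hB : B.Finite := (finite_inversionsFrom hn hper _).subset fun j ⟨h1, _, h3⟩ => ⟨h1, h3⟩
  have hsplit : inversionsFrom ω (i + 1) = inversionsFrom ω i ∪ B := by
    ext j
    simp only [inversionsFrom, B, Set.mem_ofPred_eq, Set.mem_union]
    constructor
    · rintro ⟨h1, h2⟩
      rcases (hinj.ne (show j ≠ i by omega)).lt_or_gt with h | h
      · exact Or.inl ⟨by omega, h⟩
      · exact Or.inr ⟨h1, h, h2⟩
    · rintro (⟨h1, h2⟩ | ⟨h1, _, h3⟩)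
      · exact ⟨lt_of_le_of_ne h1 fun h => by subst h; omega, by omega⟩
      · exact ⟨h1, h3⟩
  have hdisj : Disjoint (inversionsFrom ω i) B :=
    Set.disjoint_left.2 fun j ⟨_, h⟩ ⟨_, h', _⟩ => by omega
  rw [code, hsplit, Set.ncard_union_eq hdisj (finite_inversionsFrom hn hper _) hB, code]

theorem code_add_one_lt_iff (hn : 0 < n) (hper : ∀ i, ω (i + n) = ω i + n)
    (hinj : Injective ω) (i : ℤ) : code ω (i + 1) < code ω i ↔ ω (i + 1) < ω i := by
  refine ⟨fun hc => ?_, fun hd => by rw [code_eq_of_apply_add_one_lt hn hper hinj hd]; omega⟩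
  by_contra hd
  have ha : ω i < ω (i + 1) := lt_of_le_of_ne (not_lt.1 hd) (hinj.ne (by omega))
  rw [code_add_one_eq_of_apply_lt hn hper hinj ha] at hc
  omega

theorem avoids312_iff (hn : 0 < n) (hper : ∀ i, ω (i + n) = ω i + n) (hinj : Injective ω) :
    Avoids312 ω ↔ ∀ i, code ω i ≤ code ω (i + 1) + 1 := by
  constructor
  · intro hav i
    rcases (hinj.ne (show i + 1 ≠ i by omega)).lt_or_gt with hd | ha
    · have hB : {j | i + 1 < j ∧ ω (i + 1) < ω j ∧ ω j < ω i} = ∅ :=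
        Set.eq_empty_iff_forall_notMem.2 fun j ⟨h1, h2, h3⟩ =>
          hav ⟨i, i + 1, j, by omega, h1, h2, h3⟩
      rw [code_eq_of_apply_add_one_lt hn hper hinj hd, hB, Set.ncard_empty]
    · rw [code_add_one_eq_of_apply_lt hn hper hinj ha]
      omega
  · rintro hc ⟨i₁, i₂, i₃, h12, h23, h2, h3⟩
    obtain ⟨k, hk1, hk2, hk, hk'⟩ :=
      Int.exists_le_lt_and_not_add_one (p := fun k => ω i₃ < ω k) h12 (by omega) (by omega)
    have hd : ω (k + 1) < ω i₃ := lt_of_le_of_ne (not_lt.1 hk') (hinj.ne (by omega))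
    have hB : 0 < {j | k + 1 < j ∧ ω (k + 1) < ω j ∧ ω j < ω k}.ncard :=
      (Set.ncard_pos (s := {j | k + 1 < j ∧ ω (k + 1) < ω j ∧ ω j < ω k})
        ((finite_inversionsFrom hn hper k).subset fun j ⟨h1, _, h3⟩ => ⟨by omega, h3⟩)).2
        ⟨i₃, by omega, hd, hk⟩
    have := code_eq_of_apply_add_one_lt hn hper hinj (hd.trans hk)
    have := hc k
    omega

/-- The affine simple reflection `s_{i₀ mod n}`. -/
def adjSwap (n : ℕ) (i₀ j : ℤ) : ℤ :=
  if (j : ZMod n) = i₀ then j + 1 else if (j : ZMod n) = i₀ + 1 then j - 1 else j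

section adjSwap

variable {i₀ j : ℤ}

theorem adjSwap_of_eq (h : (j : ZMod n) = i₀) : adjSwap n i₀ j = j + 1 := if_pos h

theorem adjSwap_of_eq_add_one (hn : 1 < n) (h : (j : ZMod n) = i₀ + 1) :
    adjSwap n i₀ j = j - 1 := by
  rw [adjSwap, if_neg (h ▸ ZMod.add_one_ne_self hn _), if_pos h]

theorem adjSwap_self : adjSwap n i₀ i₀ = i₀ + 1 := adjSwap_of_eq rfl

theorem adjSwap_add_one (hn : 1 < n) : adjSwap n i₀ (i₀ + 1) = i₀ := by
  rw [adjSwap_of_eq_add_one hn (by push_cast; rfl), add_sub_cancel_right]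

theorem adjSwap_of_ne (h₁ : (j : ZMod n) ≠ i₀) (h₂ : (j : ZMod n) ≠ i₀ + 1) :
    adjSwap n i₀ j = j := by
  rw [adjSwap, if_neg h₁, if_neg h₂]

theorem adjSwap_adjSwap (hn : 1 < n) (j : ℤ) : adjSwap n i₀ (adjSwap n i₀ j) = j := by
  by_cases h₁ : (j : ZMod n) = i₀
  · rw [adjSwap_of_eq h₁, adjSwap_of_eq_add_one hn (by push_cast; rw [h₁]), add_sub_cancel_right]
  by_cases h₂ : (j : ZMod n) = i₀ + 1
  · rw [adjSwap_of_eq_add_one hn h₂, adjSwap_of_eq (by push_cast; rw [h₂, add_sub_cancel_right]),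
      sub_add_cancel]
  · rw [adjSwap_of_ne h₁ h₂, adjSwap_of_ne h₁ h₂]

theorem adjSwap_involutive (hn : 1 < n) : Involutive (adjSwap n i₀) := adjSwap_adjSwap hn

theorem adjSwap_add (j : ℤ) : adjSwap n i₀ (j + n) = adjSwap n i₀ j + n := by
  simp only [adjSwap, Int.cast_add, Int.cast_natCast, ZMod.natCast_self, add_zero]
  split_ifs <;> ring

theorem adjSwap_le_self (h : (j : ZMod n) ≠ i₀) : adjSwap n i₀ j ≤ j := by
  rw [adjSwap, if_neg h]
  split_ifs <;> omega

theorem le_adjSwap_self (h : (j : ZMod n) ≠ i₀ + 1) : j ≤ adjSwap n i₀ j := by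
  unfold adjSwap
  split_ifs <;> omega

theorem adjSwap_mem_Icc (j : ℤ) : adjSwap n i₀ j ∈ Icc (j - 1) (j + 1) := by
  unfold adjSwap
  split_ifs <;> simp only [mem_Icc] <;> omega

theorem adjSwap_mem_Ico (hn : 1 < n) (hj : j ∈ Ico i₀ (i₀ + n)) :
    adjSwap n i₀ j ∈ Ico i₀ (i₀ + n) := by
  rw [mem_Ico] at hj ⊢
  by_cases h₁ : (j : ZMod n) = i₀
  · rw [adjSwap_of_eq h₁, Int.eq_of_zmod_cast_eq h₁ (by omega) (by omega)]
    omega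
  by_cases h₂ : (j : ZMod n) = i₀ + 1
  · have : j = i₀ + 1 := Int.eq_of_zmod_cast_eq (by push_cast; exact h₂) (by omega) (by omega)
    rw [adjSwap_of_eq_add_one hn h₂]
    omega
  · rw [adjSwap_of_ne h₁ h₂]
    omega

theorem sum_Ico_comp_adjSwap {M : Type*} [AddCommMonoid M] (hn : 1 < n) (f : ℤ → M) :
    ∑ i ∈ Ico i₀ (i₀ + n), f (adjSwap n i₀ i) = ∑ i ∈ Ico i₀ (i₀ + n), f i :=
  sum_nbij' _ _ (fun _ => adjSwap_mem_Ico hn) (fun _ => adjSwap_mem_Ico hn)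
    (fun j _ => adjSwap_adjSwap hn j) (fun j _ => adjSwap_adjSwap hn j) fun _ _ => rfl

theorem adjSwap_lt_adjSwap_iff (hn : 1 < n) {k : ℤ} (hjk : j ≠ k)
    (h₁ : ¬((j : ZMod n) = i₀ ∧ k = j + 1)) (h₂ : ¬((k : ZMod n) = i₀ ∧ j = k + 1)) :
    adjSwap n i₀ j < adjSwap n i₀ k ↔ j < k := by
  have hs := (adjSwap_involutive (i₀ := i₀) hn).injective.ne hjk
  have hj := mem_Icc.1 (adjSwap_mem_Icc (n := n) (i₀ := i₀) j)
  have hk := mem_Icc.1 (adjSwap_mem_Icc (n := n) (i₀ := i₀) k)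
  have adj : ∀ j : ℤ, (j : ZMod n) ≠ i₀ → adjSwap n i₀ j < adjSwap n i₀ (j + 1) := fun j h =>
    (adjSwap_le_self h).trans_lt <| (lt_add_one j).trans_le <|
      le_adjSwap_self (by push_cast; exact fun h' => h (add_right_cancel h'))
  rcases lt_trichotomy (j + 1) k with hlt | rfl | hgt
  · omega
  · exact iff_of_true (adj j fun h => h₁ ⟨h, rfl⟩) (lt_add_one j)
  rcases lt_trichotomy (k + 1) j with hlt | rfl | hgt'
  · omega
  · exact iff_of_false (not_lt.2 (adj k fun h => h₂ ⟨h, rfl⟩).le) (by omega)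
  · omega

end adjSwap

section swap

variable {i₀ : ℤ}

theorem apply_add_one_lt_of_intCast_eq (hper : ∀ i, ω (i + n) = ω i + n)
    (hd : ω (i₀ + 1) < ω i₀) {j : ℤ} (h : (j : ZMod n) = i₀) : ω (j + 1) < ω j := by
  have := (periodic_apply_add_one_sub hper).eq_of_intCast_eq h
  omega

theorem comp_adjSwap_apply_add (hper : ∀ i, ω (i + n) = ω i + n) (i : ℤ) :
    (ω ∘ adjSwap n i₀) (i + n) = (ω ∘ adjSwap n i₀) i + n := by
  simp only [comp_apply, adjSwap_add, hper]

theorem IsAffinePerm.comp_adjSwap (hn : 1 < n) (h : IsAffinePerm n ω) (i₀ : ℤ) :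
    IsAffinePerm n (ω ∘ adjSwap n i₀) where
  bijective := h.bijective.comp (adjSwap_involutive hn).bijective
  apply_add := comp_adjSwap_apply_add h.apply_add
  sum_Icc := by
    rw [sum_Icc_eq_choose_iff (comp_adjSwap_apply_add h.apply_add) i₀, sum_sub_distrib]
    simp only [comp_apply]
    rw [sum_Ico_comp_adjSwap hn ω, ← sum_sub_distrib, ← sum_Icc_eq_choose_iff h.apply_add]
    exact h.sum_Icc

theorem image_inversionsFrom_comp {s : ℤ → ℤ} (hs : Involutive s) (k : ℤ) :
    s '' inversionsFrom (ω ∘ s) (s k) = {j | s k < s j ∧ ω j < ω k} := by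
  rw [Set.image_eq_preimage_of_inverse hs.leftInverse hs.rightInverse]
  ext j
  simp only [inversionsFrom, Set.mem_preimage, Set.mem_ofPred_eq, comp_apply, hs j, hs k]

theorem adjSwap_lt_adjSwap_iff_of_apply_lt (hn : 1 < n) (hper : ∀ i, ω (i + n) = ω i + n)
    (hd : ω (i₀ + 1) < ω i₀) {j k : ℤ} (hj : ω j < ω k) :
    adjSwap n i₀ k < adjSwap n i₀ j ↔ k < j ∧ ¬((k : ZMod n) = i₀ ∧ j = k + 1) := by
  by_cases hk : (k : ZMod n) = i₀ ∧ j = k + 1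
  · obtain ⟨hk, rfl⟩ := hk
    rw [adjSwap_of_eq hk, adjSwap_of_eq_add_one hn (by push_cast; rw [hk])]
    simp [hk]
  by_cases hj' : (j : ZMod n) = i₀ ∧ k = j + 1
  · obtain ⟨hj', rfl⟩ := hj'
    exact absurd hj (apply_add_one_lt_of_intCast_eq hper hd hj').not_gt
  rw [adjSwap_lt_adjSwap_iff hn (fun h => hj.ne' (congrArg ω h)) hk hj']
  exact ⟨fun h => ⟨h, hk⟩, And.left⟩

/-- At a descent `i₀`, composing with `adjSwap n i₀` removes exactly the inversions `(k, k + 1)`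
with `k ≡ i₀ [ZMOD n]`. -/
theorem code_comp_adjSwap_add (hn : 1 < n) (hper : ∀ i, ω (i + n) = ω i + n)
    (hd : ω (i₀ + 1) < ω i₀) (k : ℤ) :
    code (ω ∘ adjSwap n i₀) (adjSwap n i₀ k) + (if (k : ZMod n) = i₀ then 1 else 0) =
      code ω k := by
  have hs : Involutive (adjSwap n i₀) := adjSwap_involutive hn
  have key := fun j => adjSwap_lt_adjSwap_iff_of_apply_lt (j := j) (k := k) hn hper hd
  set A := {j | adjSwap n i₀ k < adjSwap n i₀ j ∧ ω j < ω k}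
  have hA : A.Finite := (finite_inversionsFrom (hn.trans' one_pos) hper k).subset
    fun j ⟨h1, h2⟩ => ⟨((key j h2).1 h1).1, h2⟩
  unfold code
  rw [← Set.ncard_image_of_injective _ hs.injective, image_inversionsFrom_comp hs]
  split_ifs with hk
  · have hnot : k + 1 ∉ A := fun ⟨h1, h2⟩ => ((key _ h2).1 h1).2 ⟨hk, rfl⟩
    have : inversionsFrom ω k = insert (k + 1) A := by
      ext j
      refine ⟨fun ⟨h1, h2⟩ => ?_, ?_⟩
      · rcases eq_or_ne j (k + 1) with rfl | hne
        exacts [Or.inl rfl, Or.inr ⟨(key j h2).2 ⟨h1, fun h => hne h.2⟩, h2⟩]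
      · rintro (rfl | ⟨h1, h2⟩)
        exacts [⟨lt_add_one k, apply_add_one_lt_of_intCast_eq hper hd hk⟩,
          ⟨((key j h2).1 h1).1, h2⟩]
    rw [this, Set.ncard_insert_of_notMem hnot hA]
  · rw [add_zero]
    congr 1
    ext j
    exact ⟨fun ⟨h1, h2⟩ => ⟨((key j h2).1 h1).1, h2⟩,
      fun ⟨h1, h2⟩ => ⟨(key j h2).2 ⟨h1, fun h => hk h.1⟩, h2⟩⟩

def swapCode (n : ℕ) (i₀ : ℤ) (v : ℤ → ℕ) (i : ℤ) : ℕ :=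
  v (adjSwap n i₀ i) - if (adjSwap n i₀ i : ZMod n) = i₀ then 1 else 0

theorem code_comp_adjSwap (hn : 1 < n) (hper : ∀ i, ω (i + n) = ω i + n)
    (hd : ω (i₀ + 1) < ω i₀) : code (ω ∘ adjSwap n i₀) = swapCode n i₀ (code ω) := by
  funext i
  have := code_comp_adjSwap_add hn hper hd (adjSwap n i₀ i)
  rw [adjSwap_adjSwap hn] at this
  rw [swapCode]
  omega

variable {v w : ℤ → ℕ}

theorem periodic_swapCode (hv : Periodic v n) : Periodic (swapCode n i₀ v) n := fun i => by
  simp only [swapCode, adjSwap_add, hv _, Int.cast_add, Int.cast_natCast, ZMod.natCast_self,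
    add_zero]

theorem swapCode_adjSwap_add (hn : 1 < n) (hv : Periodic v n) (hi₀ : v (i₀ + 1) < v i₀)
    (k : ℤ) : swapCode n i₀ v (adjSwap n i₀ k) + (if (k : ZMod n) = i₀ then 1 else 0) = v k := by
  simp only [swapCode, adjSwap_adjSwap hn]
  split_ifs with hk
  · have := hv.eq_of_intCast_eq hk
    omega
  · rfl

theorem eq_of_swapCode_eq (hn : 1 < n) (hv : Periodic v n) (hw : Periodic w n)
    (hvi₀ : v (i₀ + 1) < v i₀) (hwi₀ : w (i₀ + 1) < w i₀)
    (h : swapCode n i₀ v = swapCode n i₀ w) : v = w := funext fun k => by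
  rw [← swapCode_adjSwap_add hn hv hvi₀, ← swapCode_adjSwap_add hn hw hwi₀, h]

theorem swapCode_le_swapCode_add_one (hn : 1 < n) (hi₀ : v (i₀ + 1) < v i₀) :
    swapCode n i₀ v i₀ ≤ swapCode n i₀ v (i₀ + 1) := by
  simp only [swapCode, adjSwap_self, adjSwap_add_one hn, Int.cast_add, Int.cast_one,
    if_neg (ZMod.add_one_ne_self hn _), if_true, Nat.sub_zero]
  omega

theorem sum_swapCode_add_one (hn : 1 < n) (hv : Periodic v n) (hi₀ : v (i₀ + 1) < v i₀) :
    ∑ i ∈ Ico 0 (n : ℤ), swapCode n i₀ v i + 1 = ∑ i ∈ Ico 0 (n : ℤ), v i := by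
  have hone : ∑ k ∈ Ico i₀ (i₀ + n), (if (k : ZMod n) = i₀ then 1 else 0) = 1 := by
    rw [sum_eq_single_of_mem i₀ (by simp; omega) fun k hk hne => if_neg fun h =>
      hne (Int.eq_of_zmod_cast_eq h (by simp at hk; omega) (by simp at hk; omega)), if_pos rfl]
  rw [← zero_add (n : ℤ), (periodic_swapCode hv).sum_Ico_add_eq 0 i₀, hv.sum_Ico_add_eq 0 i₀,
    ← sum_Ico_comp_adjSwap hn (swapCode n i₀ v), ← hone, ← sum_add_distrib]
  exact sum_congr rfl fun k _ => swapCode_adjSwap_add hn hv hi₀ k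

end swap

theorem isAffinePerm_id : IsAffinePerm n id :=
  ⟨bijective_id, fun _ => rfl, Int.sum_Icc_one_id n⟩

theorem code_id (i : ℤ) : code id i = 0 := by
  have : inversionsFrom id i = ∅ :=
    Set.eq_empty_iff_forall_notMem.2 fun j (hj : i < j ∧ j < i) => by omega
  rw [code, this, Set.ncard_empty]

theorem IsAffinePerm.eq_id_of_code_eq_zero (hn : 0 < n) (h : IsAffinePerm n ω)
    (hc : ∀ i, code ω i = 0) : ω = id := by
  have hlt : ∀ i, ω i < ω (i + 1) := fun i => by
    have hempty := (Set.ncard_eq_zero (finite_inversionsFrom hn h.apply_add i)).1 (hc i)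
    refine lt_of_le_of_ne (not_lt.1 fun hd => ?_) (h.bijective.1.ne (by omega))
    exact hempty.subset ⟨lt_add_one i, hd⟩
  have hmono := strictMono_int_of_lt_succ hlt
  -- a strictly increasing bijection of `ℤ` has no gaps
  have hstep : ∀ i, ω (i + 1) = ω i + 1 := fun i => by
    obtain ⟨j, hj⟩ := h.bijective.2 (ω i + 1)
    have hij : i < j := hmono.lt_iff_lt.1 (by omega)
    have := hmono.monotone (show i + 1 ≤ j by omega)
    have := hlt i
    omega
  have hconst : ∀ i, ω i - i = ω 0 := fun i => by
    simpa using
      Int.apply_eq_apply_zero (f := fun i => ω i - i) (fun i => by simp only [hstep]; ring) i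
  have hsum := (sum_Icc_eq_choose_iff h.apply_add 0).1 h.sum_Icc
  simp only [hconst, sum_const, Int.card_Ico, zero_add, sub_zero, Int.toNat_natCast,
    nsmul_eq_mul] at hsum
  have h0 : ω 0 = 0 := (mul_eq_zero.1 hsum).resolve_left (by exact_mod_cast hn.ne')
  funext i
  have := hconst i
  simp only [id]
  omega

theorem eq_of_code_eq (hn : 1 < n) {ω ω' : ℤ → ℤ} (h : IsAffinePerm n ω)
    (h' : IsAffinePerm n ω') (hc : code ω = code ω') : ω = ω' := by
  induction hL : ∑ i ∈ Ico 0 (n : ℤ), code ω i using Nat.strong_induction_on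
    generalizing ω ω' with
  | _ L ih =>
  have hn0 : 0 < n := by omega
  by_cases hdes : ∃ i₀, code ω (i₀ + 1) < code ω i₀
  · obtain ⟨i₀, hi₀⟩ := hdes
    have hd := (code_add_one_lt_iff hn0 h.apply_add h.bijective.1 i₀).1 hi₀
    have hd' := (code_add_one_lt_iff hn0 h'.apply_add h'.bijective.1 i₀).1 (hc ▸ hi₀)
    have hsum := sum_swapCode_add_one hn (code_periodic h.apply_add) hi₀
    rw [← code_comp_adjSwap hn h.apply_add hd] at hsum
    refine (adjSwap_involutive hn).surjective.injective_comp_right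
      (ih (∑ i ∈ Ico 0 (n : ℤ), code (ω ∘ adjSwap n i₀) i) (by omega) (h.comp_adjSwap hn i₀)
        (h'.comp_adjSwap hn i₀) ?_ rfl)
    rw [code_comp_adjSwap hn h.apply_add hd, code_comp_adjSwap hn h'.apply_add hd', hc]
  · simp only [not_exists, not_lt] at hdes
    obtain ⟨z, hz⟩ := exists_code_eq_zero hn0 h.apply_add
    have h0 := (code_periodic h.apply_add).eq_zero_of_le_add_one hn0 hdes hz
    rw [h.eq_id_of_code_eq_zero hn0 h0, h'.eq_id_of_code_eq_zero hn0 fun i => hc ▸ h0 i]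

theorem exists_isAffinePerm_code_eq (hn : 1 < n) {v : ℤ → ℕ} (hv : Periodic v n) {z : ℤ}
    (hz : v z = 0) : ∃ ω, IsAffinePerm n ω ∧ code ω = v := by
  induction hL : ∑ i ∈ Ico 0 (n : ℤ), v i using Nat.strong_induction_on generalizing v z with
  | _ L ih =>
  have hn0 : 0 < n := by omega
  by_cases hdes : ∃ i₀, v (i₀ + 1) < v i₀
  · obtain ⟨i₀, hi₀⟩ := hdes
    have hsum := sum_swapCode_add_one hn hv hi₀
    obtain ⟨ω', h', hc'⟩ := ih (∑ i ∈ Ico 0 (n : ℤ), swapCode n i₀ v i) (by omega)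
      (periodic_swapCode hv) (z := adjSwap n i₀ z)
      (by simp [swapCode, adjSwap_adjSwap hn, hz]) rfl
    have ha : ω' i₀ < ω' (i₀ + 1) := by
      refine lt_of_le_of_ne (not_lt.1 fun hd => ?_) (h'.bijective.1.ne (by omega))
      have := (code_add_one_lt_iff hn0 h'.apply_add h'.bijective.1 i₀).2 hd
      rw [hc'] at this
      exact this.not_ge (swapCode_le_swapCode_add_one hn hi₀)
    have hd : (ω' ∘ adjSwap n i₀) (i₀ + 1) < (ω' ∘ adjSwap n i₀) i₀ := by
      simpa only [comp_apply, adjSwap_self, adjSwap_add_one hn] using ha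
    have hper := comp_adjSwap_apply_add (i₀ := i₀) h'.apply_add
    refine ⟨_, h'.comp_adjSwap hn i₀, eq_of_swapCode_eq hn (code_periodic hper) hv
      ((code_add_one_lt_iff hn0 hper (h'.comp_adjSwap hn i₀).bijective.1 i₀).2 hd) hi₀ ?_⟩
    rw [← code_comp_adjSwap hn hper hd, comp_assoc, (adjSwap_involutive hn).comp_self, comp_id,
      hc']
  · simp only [not_exists, not_lt] at hdes
    have h0 := hv.eq_zero_of_le_add_one hn0 hdes hz
    exact ⟨id, isAffinePerm_id, funext fun i => by rw [code_id, h0]⟩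

def codes312 (n : ℕ) : Set (ℤ → ℕ) :=
  {v | Periodic v n ∧ (∃ z, v z = 0) ∧ ∀ i, v i ≤ v (i + 1) + 1}

def increments (n : ℕ) (v : ℤ → ℕ) (k : Fin n) : ℕ := v ((k : ℕ) + 1) + 1 - v (k : ℕ)

theorem sum_increments {v : ℤ → ℕ} (hv : Periodic v n) (hs : ∀ i, v i ≤ v (i + 1) + 1) :
    ∑ k, increments n v k = n := by
  have hcast : ∀ k : ℕ, ((v ((k : ℤ) + 1) + 1 - v k : ℕ) : ℤ) =
      ((v ((k + 1 : ℕ) : ℤ) : ℤ) - v (k : ℤ)) + 1 := fun k => by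
    have := hs k
    push_cast
    omega
  have : ∑ k, (increments n v k : ℤ) = n := by
    simp only [increments]
    rw [Fin.sum_univ_eq_sum_range (fun k => ((v ((k : ℤ) + 1) + 1 - v k : ℕ) : ℤ)),
      sum_congr rfl fun k _ => hcast k, sum_add_distrib, sum_range_sub (fun k => (v k : ℤ)),
      hv.eq]
    simp
  exact_mod_cast this

theorem increments_injOn (hn : 0 < n) : Set.InjOn (increments n) (codes312 n) := by
  rintro v ⟨hv, ⟨z, hz⟩, hvs⟩ w ⟨hw, ⟨z', hz'⟩, hws⟩ hvw
  have hper : Periodic (fun i => ((v (i + 1) : ℤ) - v i) - ((w (i + 1) : ℤ) - w i)) n :=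
    fun i => by simp only [add_right_comm i (n : ℤ) 1, hv i, hv (i + 1), hw i, hw (i + 1)]
  have hdiff : ∀ i, ((v (i + 1) : ℤ) - v i) - ((w (i + 1) : ℤ) - w i) = 0 :=
    hper.forall_of_forall_lt hn (p := (· = 0)) fun k hk => by
      have e := congrFun hvw ⟨k, hk⟩
      have := hvs k
      have := hws k
      simp only [increments] at e
      omega
  have hconst : ∀ i, (v i : ℤ) - w i = v 0 - w 0 :=
    Int.apply_eq_apply_zero (f := fun i => (v i : ℤ) - w i) fun i => by have := hdiff i; omega
  have h0 := hconst z
  have h0' := hconst z'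
  funext i
  have := hconst i
  omega

theorem exists_periodic_increments (hn : 0 < n) {d : Fin n → ℕ} (hd : ∑ k, d k = n) :
    ∃ u : ℤ → ℤ, Periodic u n ∧ ∀ k (hk : k < n), u ((k : ℤ) + 1) - u k = d ⟨k, hk⟩ - 1 := by
  -- the partial sums of `d - 1`, extended periodically
  let e : ℕ → ℤ := fun j => if h : j < n then (d ⟨j, h⟩ : ℤ) - 1 else 0
  let R : ℕ → ℤ := fun k => ∑ j ∈ range k, e j
  have hRn : R n = 0 := by
    have : ∑ k : Fin n, e k = ∑ k, ((d k : ℤ) - 1) := sum_congr rfl fun k _ => by simp [e, k.2]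
    simp only [R]
    rw [← Fin.sum_univ_eq_sum_range e, this, sum_sub_distrib, ← Nat.cast_sum, hd]
    simp
  have hR : ∀ k ≤ n, R ((k : ℤ) % n).toNat = R k := fun k hk => by
    rcases hk.lt_or_eq with hk | rfl
    · rw [Int.emod_eq_of_lt (by omega) (by omega), Int.toNat_natCast]
    · rw [Int.emod_self, Int.toNat_zero, hRn]
      rfl
  refine ⟨fun i => R (i % n).toNat, fun i => by simp only [Int.add_emod_right], fun k hk => ?_⟩
  simp only [← Nat.cast_succ, hR _ hk, hR _ hk.le]
  simp [R, e, sum_range_succ, hk]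

theorem exists_increments_eq (hn : 0 < n) {d : Fin n → ℕ} (hd : ∑ k, d k = n) :
    ∃ v ∈ codes312 n, increments n v = d := by
  obtain ⟨u, hu, hud⟩ := exists_periodic_increments hn hd
  obtain ⟨m, hm⟩ := (hu.finite_range hn).bddBelow
  obtain ⟨_, ⟨k₀, rfl⟩, hmin⟩ := Int.exists_least_of_bdd (P := (· ∈ Set.range u))
    ⟨m, fun _ ⟨i, hi⟩ => hi ▸ hm ⟨i, rfl⟩⟩ ⟨u 0, 0, rfl⟩
  let v : ℤ → ℕ := fun i => (u i - u k₀).toNat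
  have hvu : ∀ i, (v i : ℤ) = u i - u k₀ := fun i => by
    have := hmin _ ⟨i, rfl⟩
    simp only [v]
    omega
  have hper : Periodic (fun i => (v (i + 1) : ℤ) + 1 - v i) n := fun i => by
    simp only [add_right_comm i (n : ℤ) 1, v, hu i, hu (i + 1)]
  refine ⟨v, ⟨fun i => by simp only [v, hu i], ⟨k₀, by simp [v]⟩, fun i => ?_⟩, funext fun k => ?_⟩
  · have := hper.forall_of_forall_lt hn (p := (0 ≤ ·)) (fun k hk => by
      have := hud k hk
      rw [hvu, hvu]
      omega) i
    omega
  · have := hud k k.2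
    have := hvu k
    have := hvu (k + 1)
    simp only [Fin.eta] at *
    simp only [increments]
    omega

theorem ncard_codes312 (hn : 0 < n) : (codes312 n).ncard = (2 * n - 1).choose n := by
  rw [Set.ncard_congr (t := {d : Fin n → ℕ | ∑ k, d k = n}) (fun v _ => increments n v)
    (fun _ hv => sum_increments hv.1 hv.2.2) (fun _ _ hv hw h => increments_injOn hn hv hw h)
    (fun _ hd => let ⟨v, hv, h⟩ := exists_increments_eq hn hd; ⟨v, hv, h⟩),
    ← Nat.card_coe_set_eq, Set.coe_ofPred,
    ← Nat.card_congr (Sym.equivNatSumOfFintype (Fin n) n), Nat.card_eq_fintype_card,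
    Sym.card_sym_eq_choose, Fintype.card_fin, two_mul]

theorem injOn_code (hn : 1 < n) : Set.InjOn code {ω | IsAffinePerm n ω} :=
  fun _ h _ h' hc => eq_of_code_eq hn h h' hc

theorem image_code (hn : 1 < n) :
    code '' {ω | IsAffinePerm n ω ∧ Avoids312 ω} = codes312 n := by
  have hn0 : 0 < n := by omega
  ext v
  constructor
  · rintro ⟨ω, ⟨h, hav⟩, rfl⟩
    exact ⟨code_periodic h.apply_add, exists_code_eq_zero hn0 h.apply_add,
      (avoids312_iff hn0 h.apply_add h.bijective.1).1 hav⟩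
  · rintro ⟨hv, ⟨z, hz⟩, hs⟩
    obtain ⟨ω, h, rfl⟩ := exists_isAffinePerm_code_eq hn hv hz
    exact ⟨ω, ⟨h, (avoids312_iff hn0 h.apply_add h.bijective.1).2 hs⟩, rfl⟩

end AffinePerm

open AffinePerm in
theorem count_avoiding_312 (n : ℕ) (hn : 2 ≤ n) :
    Set.ncard {ω : ℤ → ℤ | Function.Bijective ω ∧
      (∀ i : ℤ, ω (i + n) = ω i + n) ∧
      (∑ i ∈ Finset.Icc (1 : ℤ) (n : ℤ), ω i = ((n + 1).choose 2 : ℤ)) ∧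
      ¬ ∃ i₁ i₂ i₃ : ℤ, i₁ < i₂ ∧ i₂ < i₃ ∧ ω i₂ < ω i₃ ∧ ω i₃ < ω i₁} =
    (2 * n - 1).choose n := by
  have hS : {ω : ℤ → ℤ | Function.Bijective ω ∧
      (∀ i : ℤ, ω (i + n) = ω i + n) ∧
      (∑ i ∈ Finset.Icc (1 : ℤ) (n : ℤ), ω i = ((n + 1).choose 2 : ℤ)) ∧
      ¬ ∃ i₁ i₂ i₃ : ℤ, i₁ < i₂ ∧ i₂ < i₃ ∧ ω i₂ < ω i₃ ∧ ω i₃ < ω i₁} =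
      {ω | IsAffinePerm n ω ∧ Avoids312 ω} :=
    Set.ext fun _ => ⟨fun ⟨h₁, h₂, h₃, h₄⟩ => ⟨⟨h₁, h₂, h₃⟩, h₄⟩,
      fun ⟨⟨h₁, h₂, h₃⟩, h₄⟩ => ⟨h₁, h₂, h₃, h₄⟩⟩
  rw [hS, ← ((injOn_code hn).mono fun _ h => h.1).ncard_image, image_code hn,
    ncard_codes312 (by omega)]
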